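/- Let X and Y be complex Banach spaces and T : X → Y a bounded linear operator. The following are equivalent: (1) there exists a sequence (ξ_n) in X**/X with ‖ξ_n‖ = 1 and lim_{n→∞} ‖T̂ ξ_n‖ = 0; (2) there exists a bounded sequence (x_n**) in X** with d(x_n**, X) = 1 for all n and lim_{n→∞} ‖T** x_n**‖ = 0. -/

import Mathlib

namespace NormedSpace

/-- The topological dual of a seminormed space `E` (as `NormedSpace.Dual` was in Mathlib). -/
abbrev Dual (𝕜 : Type*) [NontriviallyNormedField 𝕜] (E : Type*) [SeminormedAddCommGroup E]
    [NormedSpace 𝕜 E] : Type _ := E →L[𝕜] 𝕜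

noncomputable instance (𝕜 : Type*) [NontriviallyNormedField 𝕜] (E : Type*) [SeminormedAddCommGroup E]
    [NormedSpace 𝕜 E] : NormedSpace 𝕜 (Dual 𝕜 E) := inferInstance

noncomputable instance (𝕜 : Type*) [NontriviallyNormedField 𝕜] (E : Type*) [SeminormedAddCommGroup E]
    [NormedSpace 𝕜 E] : SeminormedAddCommGroup (Dual 𝕜 E) := inferInstance

end NormedSpace

open NormedSpace Filter Topology

open Pointwise

/-- The adjoint (dual map) of a continuous linear operator between normed spaces. -/
noncomputable def dualOp {X Y : Type*} [NormedAddCommGroup X] [NormedSpace ℂ X]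
    [NormedAddCommGroup Y] [NormedSpace ℂ Y] (T : X →L[ℂ] Y) :
    Dual ℂ Y →L[ℂ] Dual ℂ X :=
  (ContinuousLinearMap.compL ℂ X Y ℂ).flip T

/-- The second adjoint `T** : X** → Y**`. -/
noncomputable def bidualOp {X Y : Type*} [NormedAddCommGroup X] [NormedSpace ℂ X]
    [NormedAddCommGroup Y] [NormedSpace ℂ Y] (T : X →L[ℂ] Y) :
    Dual ℂ (Dual ℂ X) →L[ℂ] Dual ℂ (Dual ℂ Y) :=
  dualOp (dualOp T)

/-- The canonical image of `X` in its double dual `X**`, as a submodule. -/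
noncomputable def canonicalImage (X : Type*) [NormedAddCommGroup X] [NormedSpace ℂ X] :
    Submodule ℂ (Dual ℂ (Dual ℂ X)) :=
  LinearMap.range (inclusionInDoubleDual ℂ X).toLinearMap

/-- The operator `T̂ : X**/X → Y**/Y` induced by the second adjoint `T**` on the quotients
by the canonical images of `X` and `Y`. -/
noncomputable def inducedQuotOp {X Y : Type*} [NormedAddCommGroup X] [NormedSpace ℂ X]
    [NormedAddCommGroup Y] [NormedSpace ℂ Y] (T : X →L[ℂ] Y) :
    (Dual ℂ (Dual ℂ X) ⧸ canonicalImage X) →ₗ[ℂ] (Dual ℂ (Dual ℂ Y) ⧸ canonicalImage Y) :=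
  Submodule.mapQ (canonicalImage X) (canonicalImage Y) (bidualOp T).toLinearMap
    (by rintro _ ⟨x, rfl⟩; exact ⟨T x, by ext g; rfl⟩)

section Aux

variable {X Y : Type*} [NormedAddCommGroup X] [NormedSpace ℂ X]
  [NormedAddCommGroup Y] [NormedSpace ℂ Y]

lemma dualOp_apply (T : X →L[ℂ] Y) (g : Dual ℂ Y) : dualOp T g = g.comp T := rfl

lemma bidualOp_apply (T : X →L[ℂ] Y) (x : Dual ℂ (Dual ℂ X)) (g : Dual ℂ Y) :
    bidualOp T x g = x (dualOp T g) := rfl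

lemma bidualOp_inclusion (T : X →L[ℂ] Y) (z : X) :
    bidualOp T (inclusionInDoubleDual ℂ X z) = inclusionInDoubleDual ℂ Y (T z) := by
  ext g; rfl

lemma norm_inclusion (y : Y) : ‖inclusionInDoubleDual ℂ Y y‖ = ‖y‖ :=
  (inclusionInDoubleDualLi ℂ (E := Y)).norm_map y

lemma norm_mk_infDist (Z : Type*) [NormedAddCommGroup Z] [NormedSpace ℂ Z]
    (S : Submodule ℂ (Dual ℂ (Dual ℂ Z))) (x : Dual ℂ (Dual ℂ Z)) :
    ‖(Submodule.Quotient.mk x : Dual ℂ (Dual ℂ Z) ⧸ S)‖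
      = Metric.infDist x (S : Set (Dual ℂ (Dual ℂ Z))) :=
  QuotientAddGroup.norm_mk (S := S.toAddSubgroup) x

set_option maxHeartbeats 1000000 in
/-- Key approximation lemma: if `T** x` is within `δ` of (the canonical image of) `y ∈ Y`, and
`‖x‖ ≤ r`, then `y` is within `δ + ε` of `T (closedBall 0 r)`. -/
lemma approx_lemma (T : X →L[ℂ] Y) {x : Dual ℂ (Dual ℂ X)} {y : Y} {r δ ε : ℝ}
    (hr : ‖x‖ ≤ r) (hδ : ‖bidualOp T x - inclusionInDoubleDual ℂ Y y‖ ≤ δ)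
    (hε : 0 < ε) : ∃ z : X, ‖z‖ ≤ r ∧ ‖T z - y‖ < δ + ε := by
  have hr0 : 0 ≤ r := le_trans (norm_nonneg _) hr
  have hδ0 : 0 ≤ δ := le_trans (norm_nonneg _) hδ
  rcases eq_or_lt_of_le hr0 with hr0' | hrpos
  · -- r = 0, hence ‖y‖ ≤ δ
    have hxb : ‖bidualOp T x‖ ≤ 0 := by
      calc ‖bidualOp T x‖ ≤ ‖bidualOp T‖ * ‖x‖ := (bidualOp T).le_opNorm x
        _ ≤ ‖bidualOp T‖ * r := mul_le_mul_of_nonneg_left hr (norm_nonneg _)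
        _ = 0 := by rw [← hr0', mul_zero]
    have h3 := norm_add_le (inclusionInDoubleDual ℂ Y y - bidualOp T x) (bidualOp T x)
    rw [sub_add_cancel] at h3
    have h4 : ‖inclusionInDoubleDual ℂ Y y - bidualOp T x‖ ≤ δ := by
      rw [norm_sub_rev]; exact hδ
    refine ⟨0, by simp [← hr0'], ?_⟩
    have h5 : ‖inclusionInDoubleDual ℂ Y y‖ ≤ δ := by linarith
    rw [norm_inclusion] at h5
    simpa using lt_of_le_of_lt h5 (by linarith)
  by_contra hcon
  push_neg at hcon
  have hcon' : ∀ z : X, ‖z‖ ≤ r → δ + ε ≤ ‖T z - y‖ := hcon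
  -- separate y from the closed convex set K
  set S : Set Y := ⇑T '' Metric.closedBall (0 : X) r + Metric.closedBall (0 : Y) (δ + ε / 2)
    with hS
  have hyK : y ∉ closure S := by
    intro hy
    obtain ⟨s, hsS, hdist⟩ := Metric.mem_closure_iff.1 hy (ε / 2) (by linarith)
    rw [hS, Set.mem_add] at hsS
    obtain ⟨a, ⟨z, hz, rfl⟩, w, hw, rfl⟩ := hsS
    have h1 : δ + ε ≤ ‖T z - y‖ := hcon' z (by simpa using hz)
    have h2 : ‖w‖ ≤ δ + ε / 2 := by simpa using hw
    have h5 : ‖T z - y‖ ≤ dist y (T z + w) + ‖w‖ := by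
      rw [dist_eq_norm]
      have he : T z - y = -((y - (T z + w)) + w) := by abel
      rw [he, norm_neg]
      exact norm_add_le _ _
    linarith
  have hconv : Convex ℝ (closure S) := by
    rw [hS]
    exact (((convex_closedBall (0 : X) r).linear_image
      (T.restrictScalars ℝ).toLinearMap).add (convex_closedBall _ _)).closure
  obtain ⟨g, u, hKu, hyu⟩ := geometric_hahn_banach_closed_point hconv isClosed_closure hyK
  -- For all ‖z‖ ≤ r: g (T z) + (δ + ε/2) * ‖g‖ ≤ u
  have hmem : ∀ z : X, ‖z‖ ≤ r → ∀ w : Y, ‖w‖ ≤ δ + ε / 2 → g (T z) + g w < u := by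
    intro z hz w hw
    have hTz : T z ∈ ⇑T '' Metric.closedBall (0 : X) r :=
      Set.mem_image_of_mem _ (by simpa using hz)
    have hwmem : w ∈ Metric.closedBall (0 : Y) (δ + ε / 2) := by simpa using hw
    have : T z + w ∈ S := by rw [hS]; exact Set.add_mem_add hTz hwmem
    simpa using hKu _ (subset_closure this)
  have hkey : ∀ z : X, ‖z‖ ≤ r → g (T z) + (δ + ε / 2) * ‖g‖ ≤ u := by
    intro z hz
    have hc0 : 0 ≤ u - g (T z) := by
      have := hmem z hz 0 (by simp only [norm_zero]; positivity)
      simp only [map_zero, add_zero] at this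
      linarith
    have hgb : ‖g‖ ≤ (u - g (T z)) / (δ + ε / 2) := by
      refine ContinuousLinearMap.opNorm_le_bound _ (by positivity) fun w => ?_
      rcases eq_or_ne w 0 with rfl | hw0
      · simp
      have hwpos : 0 < ‖w‖ := norm_pos_iff.2 hw0
      have hscale : ∀ s : ℝ, |s| = 1 →
          g (((δ + ε / 2) / ‖w‖) • (s • w)) ≤ u - g (T z) := by
        intro s hs
        have hn : ‖((δ + ε / 2) / ‖w‖) • (s • w)‖ ≤ δ + ε / 2 := by
          rw [norm_smul, norm_smul, Real.norm_eq_abs, Real.norm_eq_abs, hs, one_mul,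
            abs_of_nonneg (by positivity : (0:ℝ) ≤ (δ + ε / 2) / ‖w‖),
            div_mul_cancel₀ _ (ne_of_gt hwpos)]
        have := hmem z hz _ hn
        linarith
      have h1 := hscale 1 (by norm_num)
      have h2 := hscale (-1) (by norm_num)
      rw [map_smul, map_smul, smul_eq_mul, smul_eq_mul] at h1 h2
      simp only [one_mul, neg_one_mul] at h1 h2
      have habs : ((δ + ε / 2) / ‖w‖) * |g w| ≤ u - g (T z) := by
        rcases abs_cases (g w) with ⟨h, _⟩ | ⟨h, _⟩
        · rw [h]; exact h1
        · rw [h]; simpa [mul_neg] using h2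
      have hmul := mul_le_mul_of_nonneg_right habs (norm_nonneg w)
      have heq : ((δ + ε / 2) / ‖w‖) * |g w| * ‖w‖ = |g w| * (δ + ε / 2) := by
        field_simp
      rw [heq] at hmul
      rw [Real.norm_eq_abs, div_mul_eq_mul_div, le_div_iff₀ (by positivity)]
      exact hmul
    have := mul_le_mul_of_nonneg_left hgb (by positivity : (0:ℝ) ≤ δ + ε / 2)
    rw [mul_div_cancel₀ _ (by positivity : (δ + ε / 2) ≠ 0)] at this
    linarith
  -- complexify g
  set h : Y →L[ℂ] ℂ := g.extendTo𝕜' with hh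
  have hre : ∀ w : Y, (h w).re = g w := fun w =>
    LinearMap.extendTo𝕜'_apply_re (𝕜 := ℂ) g.toLinearMap w
  have hnormh : ‖h‖ = ‖g‖ := ContinuousLinearMap.norm_extendTo𝕜' g
  set c₀ : ℝ := u - (δ + ε / 2) * ‖g‖ with hc₀
  have hc₀0 : 0 ≤ c₀ := by
    have := hkey 0 (by simpa using hr0)
    simp only [map_zero] at this
    simp only [hc₀]; linarith
  -- ∀ ‖z‖ ≤ r, ‖h (T z)‖ ≤ c₀
  have hhb : ∀ z : X, ‖z‖ ≤ r → ‖h (T z)‖ ≤ c₀ := by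
    intro z hz
    rcases eq_or_ne (h (T z)) 0 with h0 | h0
    · simpa [h0] using hc₀0
    set θ : ℂ := (‖h (T z)‖ : ℂ) / h (T z) with hθ
    have hθ1 : ‖θ‖ = 1 := by
      rw [hθ, norm_div]
      rw [Complex.norm_real, Real.norm_eq_abs, abs_norm]
      exact div_self (norm_ne_zero_iff.2 h0)
    have hrot : h (T (θ • z)) = (‖h (T z)‖ : ℂ) := by
      rw [map_smul, map_smul, smul_eq_mul, hθ, div_mul_cancel₀ _ h0]
    have hzn : ‖θ • z‖ ≤ r := by rw [norm_smul, hθ1, one_mul]; exact hz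
    have hk := hkey (θ • z) hzn
    have hre' : g (T (θ • z)) = ‖h (T z)‖ := by
      rw [← hre, hrot]; simp
    rw [hre'] at hk
    simp only [hc₀]
    linarith
  -- bound ‖dualOp T h‖
  have hdb : ‖dualOp T h‖ ≤ c₀ / r := by
    refine ContinuousLinearMap.opNorm_le_bound _ (div_nonneg hc₀0 hr0) fun z => ?_
    rcases eq_or_ne z 0 with rfl | hz0
    · simp
    have hzpos : 0 < ‖z‖ := norm_pos_iff.2 hz0
    have hrz0 : (0:ℝ) ≤ r / ‖z‖ := div_nonneg hr0 hzpos.le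
    set c : ℂ := ((r / ‖z‖ : ℝ) : ℂ) with hc
    have hznorm : ‖c • z‖ ≤ r := by
      rw [hc, norm_smul, Complex.norm_real, Real.norm_eq_abs, abs_of_nonneg hrz0,
        div_mul_cancel₀ _ (ne_of_gt hzpos)]
    have hb := hhb (c • z) hznorm
    rw [map_smul, map_smul, norm_smul, hc, Complex.norm_real, Real.norm_eq_abs,
      abs_of_nonneg hrz0] at hb
    have hdz : (dualOp T h) z = h (T z) := rfl
    rw [hdz, div_mul_eq_mul_div, le_div_iff₀ hrpos]
    calc ‖h (T z)‖ * r = (r / ‖z‖ * ‖h (T z)‖) * ‖z‖ := by field_simp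
      _ ≤ c₀ * ‖z‖ := mul_le_mul_of_nonneg_right hb (norm_nonneg z)
  -- final contradiction
  have hJy : (inclusionInDoubleDual ℂ Y y) h = h y := rfl
  have hsplit : (inclusionInDoubleDual ℂ Y y) h
      = bidualOp T x h - ((bidualOp T x - inclusionInDoubleDual ℂ Y y) h) := by
    simp
  have hb1 : ‖bidualOp T x h‖ ≤ c₀ := by
    rw [bidualOp_apply]
    calc ‖x (dualOp T h)‖ ≤ ‖x‖ * ‖dualOp T h‖ := x.le_opNorm _
      _ ≤ r * (c₀ / r) := mul_le_mul hr hdb (norm_nonneg _) hr0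
      _ = c₀ := by field_simp
  have hb2 : ‖(bidualOp T x - inclusionInDoubleDual ℂ Y y) h‖ ≤ δ * ‖g‖ := by
    calc ‖(bidualOp T x - inclusionInDoubleDual ℂ Y y) h‖
        ≤ ‖bidualOp T x - inclusionInDoubleDual ℂ Y y‖ * ‖h‖ :=
          ContinuousLinearMap.le_opNorm _ _
      _ ≤ δ * ‖g‖ := by
          rw [hnormh]
          exact mul_le_mul_of_nonneg_right hδ (norm_nonneg g)
  have hgy : g y ≤ c₀ + δ * ‖g‖ := by
    have : g y = ((inclusionInDoubleDual ℂ Y y) h).re := by rw [hJy, hre]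
    rw [this, hsplit]
    calc (bidualOp T x h - (bidualOp T x - inclusionInDoubleDual ℂ Y y) h).re
        ≤ ‖bidualOp T x h - (bidualOp T x - inclusionInDoubleDual ℂ Y y) h‖ :=
          Complex.re_le_norm _
      _ ≤ ‖bidualOp T x h‖ + ‖(bidualOp T x - inclusionInDoubleDual ℂ Y y) h‖ :=
          norm_sub_le _ _
      _ ≤ c₀ + δ * ‖g‖ := add_le_add hb1 hb2
  have : g y ≤ u - (ε / 2) * ‖g‖ := by
    simp only [hc₀] at hgy; nlinarith [norm_nonneg g]
  nlinarith [norm_nonneg g, mul_nonneg (le_of_lt (by linarith : (0:ℝ) < ε / 2)) (norm_nonneg g)]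

end Aux

/-- For a bounded operator `T : X → Y` between complex Banach spaces, the following are
equivalent: (1) there is a sequence `(ξₙ)` in `X**/X` with `‖ξₙ‖ = 1` and `‖T̂ ξₙ‖ → 0`;
(2) there is a bounded sequence `(xₙ**)` in `X**` with `d(xₙ**, X) = 1` for all `n` and
`‖T** xₙ**‖ → 0`. -/
theorem exists_norm_one_quot_seq_iff
    (X Y : Type*) [NormedAddCommGroup X] [NormedSpace ℂ X] [CompleteSpace X]
    [NormedAddCommGroup Y] [NormedSpace ℂ Y] [CompleteSpace Y]
    (T : X →L[ℂ] Y) :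
    (∃ ξ : ℕ → (Dual ℂ (Dual ℂ X) ⧸ canonicalImage X),
        (∀ n, ‖ξ n‖ = 1) ∧
        Tendsto (fun n => ‖inducedQuotOp T (ξ n)‖) atTop (𝓝 0)) ↔
    (∃ x : ℕ → Dual ℂ (Dual ℂ X),
        (∃ C : ℝ, ∀ n, ‖x n‖ ≤ C) ∧
        (∀ n, Metric.infDist (x n) (canonicalImage X : Set (Dual ℂ (Dual ℂ X))) = 1) ∧
        Tendsto (fun n => ‖bidualOp T (x n)‖) atTop (𝓝 0)) := by
  constructor
  · rintro ⟨ξ, hξ1, hξT⟩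
    have hstep : ∀ n : ℕ, ∃ x' : Dual ℂ (Dual ℂ X), ‖x'‖ ≤ 4 ∧
        Metric.infDist x' (canonicalImage X : Set (Dual ℂ (Dual ℂ X))) = 1 ∧
        ‖bidualOp T x'‖ ≤ 2 * ‖inducedQuotOp T (ξ n)‖ + 3 / (n + 1) := by
      intro n
      have hn1 : (0:ℝ) < 1 / (n + 1) := by positivity
      -- representative of ξ n
      obtain ⟨m, hm, hmn⟩ := Submodule.Quotient.norm_mk_lt (ξ n) one_pos
      have hmn2 : ‖m‖ ≤ 2 := by rw [hξ1 n] at hmn; linarith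
      -- representative of the image coset
      have himg : inducedQuotOp T (ξ n)
          = Submodule.Quotient.mk (bidualOp T m) := by
        rw [← hm, inducedQuotOp, Submodule.mapQ_apply]; rfl
      obtain ⟨m', hm', hmn'⟩ := Submodule.Quotient.norm_mk_lt (inducedQuotOp T (ξ n)) hn1
      have hdiff : bidualOp T m - m' ∈ canonicalImage Y := by
        rw [← Submodule.Quotient.eq]
        rw [← himg, hm']
      obtain ⟨y', hy'⟩ := hdiff
      replace hy' : inclusionInDoubleDual ℂ Y y' = bidualOp T m - m' := hy'
      -- apply the approximation lemma
      obtain ⟨z, hz2, hzy⟩ := approx_lemma T (x := m) (y := y') (r := 2) (δ := ‖m'‖)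
        (ε := 1 / (n + 1)) hmn2 (by rw [hy']; simp [norm_sub_rev]) hn1
      refine ⟨m - inclusionInDoubleDual ℂ X z, ?_, ?_, ?_⟩
      · calc ‖m - inclusionInDoubleDual ℂ X z‖ ≤ ‖m‖ + ‖inclusionInDoubleDual ℂ X z‖ :=
            norm_sub_le _ _
          _ ≤ 2 + 2 := by rw [norm_inclusion]; exact add_le_add hmn2 hz2
          _ = 4 := by norm_num
      · rw [← norm_mk_infDist X (canonicalImage X)]
        have : (Submodule.Quotient.mk (m - inclusionInDoubleDual ℂ X z) :
            Dual ℂ (Dual ℂ X) ⧸ canonicalImage X) = Submodule.Quotient.mk m := by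
          have hmem : inclusionInDoubleDual ℂ X z ∈ canonicalImage X := ⟨z, rfl⟩
          rw [Submodule.Quotient.eq]
          simpa using Submodule.neg_mem _ hmem
        rw [this, hm, hξ1 n]
      · have he : bidualOp T (m - inclusionInDoubleDual ℂ X z)
            = (bidualOp T m - inclusionInDoubleDual ℂ Y y')
              + (inclusionInDoubleDual ℂ Y y' - inclusionInDoubleDual ℂ Y (T z)) := by
          rw [map_sub, bidualOp_inclusion]; abel
        rw [he]
        have h1 : ‖bidualOp T m - inclusionInDoubleDual ℂ Y y'‖ = ‖m'‖ := by
          rw [hy']; simp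
        have h2 : ‖inclusionInDoubleDual ℂ Y y' - inclusionInDoubleDual ℂ Y (T z)‖
            = ‖y' - T z‖ := by
          rw [← map_sub, norm_inclusion]
        calc ‖(bidualOp T m - inclusionInDoubleDual ℂ Y y')
              + (inclusionInDoubleDual ℂ Y y' - inclusionInDoubleDual ℂ Y (T z))‖
            ≤ ‖bidualOp T m - inclusionInDoubleDual ℂ Y y'‖
              + ‖inclusionInDoubleDual ℂ Y y' - inclusionInDoubleDual ℂ Y (T z)‖ :=
              norm_add_le _ _
          _ ≤ ‖m'‖ + (‖m'‖ + 1 / (n + 1)) := by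
              rw [h1, h2]
              exact add_le_add le_rfl (by rw [norm_sub_rev]; exact hzy.le)
          _ ≤ 2 * ‖inducedQuotOp T (ξ n)‖ + 3 / (n + 1) := by
              have : ‖m'‖ ≤ ‖inducedQuotOp T (ξ n)‖ + 1 / (n+1) := hmn'.le
              have h3 : (3:ℝ) / (n + 1) = 1 / (n+1) + 1/(n+1) + 1/(n+1) := by ring
              linarith
    choose x hx4 hxd hxT using hstep
    refine ⟨x, ⟨4, hx4⟩, hxd, ?_⟩
    have hb : Tendsto (fun n : ℕ => 2 * ‖inducedQuotOp T (ξ n)‖ + 3 / (n + 1)) atTop (𝓝 0) := by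
      have h1 : Tendsto (fun n : ℕ => 2 * ‖inducedQuotOp T (ξ n)‖) atTop (𝓝 (2 * 0)) :=
        hξT.const_mul 2
      have h2 : Tendsto (fun n : ℕ => 3 / ((n:ℝ) + 1)) atTop (𝓝 0) := by
        have := (tendsto_one_div_add_atTop_nhds_zero_nat (𝕜 := ℝ)).const_mul 3
        simpa [div_eq_mul_inv, mul_comm] using this
      simpa using h1.add h2
    exact squeeze_zero (fun n => norm_nonneg _) hxT hb
  · rintro ⟨x, ⟨C, hC⟩, hd, hT⟩
    refine ⟨fun n => Submodule.Quotient.mk (x n), fun n => ?_, ?_⟩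
    · show ‖(Submodule.Quotient.mk (x n) : Dual ℂ (Dual ℂ X) ⧸ canonicalImage X)‖ = 1
      rw [norm_mk_infDist X (canonicalImage X)]; exact hd n
    · have hle : ∀ n, ‖inducedQuotOp T (Submodule.Quotient.mk (x n))‖ ≤ ‖bidualOp T (x n)‖ := by
        intro n
        rw [inducedQuotOp, Submodule.mapQ_apply]
        exact Submodule.Quotient.norm_mk_le _ _
      exact squeeze_zero (fun n => norm_nonneg _) hle hT
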